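/- Let f : ℝⁿ → ℝ be C² and satisfy the PL inequality with constant μ around a local minimum x̄ with value f* and solution set S. Then the rank of ∇²f is locally constant on S near x̄: rank ∇²f(x) = rank ∇²f(x̄) for all x ∈ S close enough to x̄. -/

import Mathlib

/-!
At a minimizer `x` in the PL region, expanding `f` to second order along lines turns local
minimality into `0 ⪯ ∇²f(x)` and the PL inequality into `μ ∇²f(x) ⪯ ∇²f(x)²`. Hence every
nonzero eigenvalue of the symmetric matrix `∇²f(x)` is at least `μ`, i.e. `∇²f(x)` is
`μ`-coercive on its range. Once `‖∇²f(x) - ∇²f(x̄)‖ < μ`, this makes `∇²f(x̄)` injective on the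
range of `∇²f(x)`, so `rank ∇²f(x) ≤ rank ∇²f(x̄)`. The reverse inequality near `x̄` is lower
semicontinuity of the rank, and both conditions hold near `x̄` by continuity of the Hessian.
-/

open Metric Filter Topology

open scoped RealInnerProductSpace

section Rank

variable {𝕜 E F : Type*} [NontriviallyNormedField 𝕜] [CompleteSpace 𝕜]
  [NormedAddCommGroup E] [NormedSpace 𝕜 E] [NormedAddCommGroup F] [NormedSpace 𝕜 F]
  [FiniteDimensional 𝕜 F]

theorem ContinuousLinearMap.eventually_finrank_range_le (A : E →L[𝕜] F) :
    ∀ᶠ B : E →L[𝕜] F in 𝓝 A, Module.finrank 𝕜 (LinearMap.range (A : E →ₗ[𝕜] F)) ≤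
      Module.finrank 𝕜 (LinearMap.range (B : E →ₗ[𝕜] F)) := by
  have hA : A ∈ {B : E →L[𝕜] F |
      ↑(Module.finrank 𝕜 (LinearMap.range (A : E →ₗ[𝕜] F))) ≤ (B : E →ₗ[𝕜] F).rank} := by
    rw [Set.mem_ofPred, LinearMap.rank, Module.finrank_eq_rank]
  filter_upwards [(isOpen_setOfPred_nat_le_rank _).mem_nhds hA] with B hB
  rwa [LinearMap.rank, ← Module.finrank_eq_rank, Nat.cast_le] at hB

end Rank

section DirectionalLimits

variable {E F : Type*} [NormedAddCommGroup E] [NormedSpace ℝ E] [NormedAddCommGroup F]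
  [NormedSpace ℝ F] {x : E}

theorem Filter.Eventually.comp_add_smul {P : E → Prop} (h : ∀ᶠ y in 𝓝 x, P y) (v : E) :
    ∀ᶠ t : ℝ in 𝓝 0, P (x + t • v) :=
  (Continuous.tendsto' (by fun_prop) 0 x (by simp)).eventually h

theorem DifferentiableAt.tendsto_slope_zero_add_smul {G : E → F} (hG : DifferentiableAt ℝ G x)
    (v : E) :
    Tendsto (fun t : ℝ => t⁻¹ • (G (x + t • v) - G x)) (𝓝[≠] 0) (𝓝 (fderiv ℝ G x v)) := by
  have hline : HasDerivAt (fun t : ℝ => x + t • v) v 0 := by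
    simpa using ((hasDerivAt_id (0 : ℝ)).smul_const v).const_add x
  have hcomp := (hG.hasFDerivAt.comp_hasDerivAt_of_eq 0 hline (by simp)).tendsto_slope_zero
  simpa using hcomp

theorem tendsto_sub_div_sq_of_deriv_eq_zero {g g' : ℝ → ℝ} {a : ℝ}
    (hg : ∀ᶠ t in 𝓝 0, HasDerivAt g (g' t) t) (hg'0 : g' 0 = 0) (hg' : HasDerivAt g' a 0) :
    Tendsto (fun t => (g t - g 0) / t ^ 2) (𝓝[≠] 0) (𝓝 (a / 2)) := by
  have hslope : Tendsto (fun t => g' t / (2 * t)) (𝓝[≠] 0) (𝓝 (a / 2)) := by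
    refine (hg'.tendsto_slope_zero.div_const 2).congr' ?_
    filter_upwards [self_mem_nhdsWithin] with t ht
    simp only [zero_add, hg'0, sub_zero, smul_eq_mul]
    field_simp
  refine HasDerivAt.lhopital_zero_nhdsNE
    (nhdsWithin_le_nhds (hg.mono fun t ht => ht.sub_const (g 0)))
    (.of_forall fun t => by simpa using hasDerivAt_pow 2 t) ?_ ?_ ?_ hslope
  · filter_upwards [self_mem_nhdsWithin] with t ht
    simpa using ht
  · have hcont : ContinuousAt (fun t => g t - g 0) 0 :=
      (hg.self_of_nhds.sub_const (g 0)).continuousAt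
    simpa using hcont.tendsto.mono_left nhdsWithin_le_nhds
  · exact tendsto_nhdsWithin_of_tendsto_nhds
      (by simpa using (continuous_pow 2).tendsto (0 : ℝ))

end DirectionalLimits

section InnerProductSpace

variable {E : Type*} [NormedAddCommGroup E] [InnerProductSpace ℝ E] [FiniteDimensional ℝ E]

theorem LinearMap.IsSymmetric.mul_norm_sq_le_inner_of_mem_range {T : E →ₗ[ℝ] E}
    (hT : T.IsSymmetric) {μ : ℝ} (hpsd : ∀ v, 0 ≤ ⟪v, T v⟫)
    (hgap : ∀ v, μ * ⟪v, T v⟫ ≤ ‖T v‖ ^ 2) :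
    ∀ v ∈ LinearMap.range T, μ * ‖v‖ ^ 2 ≤ ⟪v, T v⟫ := by
  rintro _ ⟨w, rfl⟩
  set b := hT.eigenvectorBasis rfl
  set ev := hT.eigenvalues rfl
  have happly : ∀ i, T (b i) = ev i • b i := fun i => hT.apply_eigenvectorBasis rfl i
  have hTb : ∀ i x, ⟪b i, T x⟫ = ev i * ⟪b i, x⟫ := fun i x => by
    rw [← hT, happly, real_inner_smul_left]
  have hev : ∀ i, 0 ≤ ev i ∧ μ * ev i ≤ ev i ^ 2 := fun i => by
    have hb : ‖b i‖ = 1 := b.orthonormal.1 i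
    constructor
    · simpa [happly, real_inner_smul_right, hb] using hpsd (b i)
    · simpa [happly, real_inner_smul_right, norm_smul, hb] using hgap (b i)
  have hexpand : ∀ x, ⟪T w, x⟫ = ∑ i, ⟪b i, T w⟫ * ⟪b i, x⟫ := fun x => by
    rw [← b.sum_inner_mul_inner]
    simp_rw [real_inner_comm (T w)]
  rw [← real_inner_self_eq_norm_sq, hexpand, hexpand, Finset.mul_sum]
  refine Finset.sum_le_sum fun i _ => ?_
  -- with `λ = ev i`, `c = ⟪b i, w⟫`: `μ (λ c)² ≤ λ (λ c)²` since `0 ≤ λ` and `μ λ ≤ λ²`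
  rw [hTb i (T w), hTb i w]
  obtain ⟨h0, hμ⟩ := hev i
  nlinarith [mul_le_mul_of_nonneg_left hμ (mul_nonneg h0 (sq_nonneg ⟪b i, w⟫))]

theorem ContinuousLinearMap.finrank_range_le_of_norm_sub_lt {H K : E →L[ℝ] E} {μ : ℝ}
    (hcoer : ∀ v ∈ LinearMap.range (H : E →ₗ[ℝ] E), μ * ‖v‖ ^ 2 ≤ ⟪v, H v⟫)
    (hclose : ‖H - K‖ < μ) :
    Module.finrank ℝ (LinearMap.range (H : E →ₗ[ℝ] E)) ≤
      Module.finrank ℝ (LinearMap.range (K : E →ₗ[ℝ] E)) := by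
  have hinj : Function.Injective
      ((K : E →ₗ[ℝ] E) ∘ₗ (LinearMap.range (H : E →ₗ[ℝ] E)).subtype) := by
    rw [← LinearMap.ker_eq_bot, Submodule.eq_bot_iff]
    rintro ⟨v, hv⟩ hKv
    replace hKv : K v = 0 := by simpa using hKv
    by_contra hne
    have hv0 : 0 < ‖v‖ := norm_pos_iff.mpr (by simpa using hne)
    refine lt_irrefl (μ * ‖v‖ ^ 2) ?_
    calc μ * ‖v‖ ^ 2 ≤ ⟪v, H v⟫ := hcoer v hv
      _ = ⟪v, (H - K) v⟫ := by simp [hKv]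
      _ ≤ ‖v‖ * (‖H - K‖ * ‖v‖) :=
        (real_inner_le_norm _ _).trans (by gcongr; exact (H - K).le_opNorm v)
      _ < μ * ‖v‖ ^ 2 := by rw [← mul_assoc, mul_comm ‖v‖, mul_assoc, ← sq]; gcongr
  rw [← LinearMap.finrank_range_of_inj hinj]
  exact Submodule.finrank_mono (LinearMap.range_comp_le_range _ _)

end InnerProductSpace

section Calculus

variable {E : Type*} [NormedAddCommGroup E] [InnerProductSpace ℝ E] [CompleteSpace E]
  {f : E → ℝ} {x : E}

theorem IsLocalMin.gradient_eq_zero (h : IsLocalMin f x) : gradient f x = 0 := by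
  simp [gradient, h.fderiv_eq_zero]

theorem ContDiff.contDiff_gradient (hf : ContDiff ℝ 2 f) : ContDiff ℝ 1 (gradient f) :=
  (InnerProductSpace.toDual ℝ E).symm.contDiff.comp (hf.fderiv_right (by norm_num))

theorem inner_fderiv_gradient_apply (u w : E) :
    ⟪fderiv ℝ (gradient f) x u, w⟫ = fderiv ℝ (fderiv ℝ f) x u w := by
  rw [← toDual_comp_gradient, LinearIsometryEquiv.comp_fderiv]
  rfl

theorem ContDiff.isSymmetric_fderiv_gradient (hf : ContDiff ℝ 2 f) (x : E) :
    (fderiv ℝ (gradient f) x : E →ₗ[ℝ] E).IsSymmetric := fun u w => by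
  rw [ContinuousLinearMap.coe_coe, inner_fderiv_gradient_apply, real_inner_comm,
    inner_fderiv_gradient_apply, hf.contDiffAt.isSymmSndFDerivAt (by simp)]

theorem tendsto_sub_div_sq_inner_fderiv_gradient (hf : Differentiable ℝ f)
    (hG : DifferentiableAt ℝ (gradient f) x) (hx : gradient f x = 0) (v : E) :
    Tendsto (fun t : ℝ => (f (x + t • v) - f x) / t ^ 2) (𝓝[≠] 0)
      (𝓝 (⟪v, fderiv ℝ (gradient f) x v⟫ / 2)) := by
  have hline : ∀ t : ℝ, HasDerivAt (fun s : ℝ => x + s • v) v t := fun t => by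
    simpa using ((hasDerivAt_id t).smul_const v).const_add x
  have hg : ∀ t : ℝ, HasDerivAt (fun s : ℝ => f (x + s • v)) ⟪v, gradient f (x + t • v)⟫ t :=
    fun t => by
      rw [real_inner_comm, inner_gradient_left]
      exact (hf _).hasFDerivAt.comp_hasDerivAt t (hline t)
  have hg' : HasDerivAt (fun s : ℝ => ⟪v, gradient f (x + s • v)⟫)
      ⟪v, fderiv ℝ (gradient f) x v⟫ 0 :=
    (innerSL ℝ v).hasFDerivAt.comp_hasDerivAt 0
      (hG.hasFDerivAt.comp_hasDerivAt_of_eq 0 (hline 0) (by simp))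
  simpa using tendsto_sub_div_sq_of_deriv_eq_zero (.of_forall hg) (by simp [hx]) hg'

theorem IsLocalMin.inner_fderiv_gradient_self_nonneg (h : IsLocalMin f x)
    (hf : Differentiable ℝ f) (hG : DifferentiableAt ℝ (gradient f) x) (v : E) :
    0 ≤ ⟪v, fderiv ℝ (gradient f) x v⟫ := by
  have hlim := tendsto_sub_div_sq_inner_fderiv_gradient hf hG h.gradient_eq_zero v
  have hnonneg : ∀ᶠ t : ℝ in 𝓝[≠] 0, 0 ≤ (f (x + t • v) - f x) / t ^ 2 :=
    nhdsWithin_le_nhds <| (h.comp_add_smul v).mono fun t ht =>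
      div_nonneg (sub_nonneg.mpr ht) (sq_nonneg t)
  linarith [ge_of_tendsto hlim hnonneg]

theorem mul_inner_fderiv_gradient_self_le_of_pl {μ : ℝ} (hμ : 0 < μ) (hf : Differentiable ℝ f)
    (hG : DifferentiableAt ℝ (gradient f) x) (hx : gradient f x = 0)
    (hPL : ∀ᶠ y in 𝓝 x, f y - f x ≤ 1 / (2 * μ) * ‖gradient f y‖ ^ 2) (v : E) :
    μ * ⟪v, fderiv ℝ (gradient f) x v⟫ ≤ ‖fderiv ℝ (gradient f) x v‖ ^ 2 := by
  have hlim := tendsto_sub_div_sq_inner_fderiv_gradient hf hG hx v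
  have hslope : Tendsto (fun t : ℝ => 1 / (2 * μ) * ‖t⁻¹ • gradient f (x + t • v)‖ ^ 2)
      (𝓝[≠] 0) (𝓝 (1 / (2 * μ) * ‖fderiv ℝ (gradient f) x v‖ ^ 2)) := by
    have h := hG.tendsto_slope_zero_add_smul v
    rw [hx] at h
    simpa using (h.norm.pow 2).const_mul (1 / (2 * μ))
  have hle : ∀ᶠ t : ℝ in 𝓝[≠] 0,
      (f (x + t • v) - f x) / t ^ 2 ≤ 1 / (2 * μ) * ‖t⁻¹ • gradient f (x + t • v)‖ ^ 2 :=
    nhdsWithin_le_nhds <| (hPL.comp_add_smul v).mono fun t ht => by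
      have hscale : 1 / (2 * μ) * ‖t⁻¹ • gradient f (x + t • v)‖ ^ 2 =
          1 / (2 * μ) * ‖gradient f (x + t • v)‖ ^ 2 / t ^ 2 := by
        rw [norm_smul, norm_inv, Real.norm_eq_abs, mul_pow, inv_pow, sq_abs]
        ring
      rw [hscale]
      exact div_le_div_of_nonneg_right ht (sq_nonneg t)
  have := le_of_tendsto_of_tendsto hlim hslope hle
  field_simp at this
  linarith

end Calculus

theorem pl_hessian_rank_locally_constant_general {n : ℕ}
    (f : EuclideanSpace ℝ (Fin n) → ℝ) (xb : EuclideanSpace ℝ (Fin n))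
    (hf : ContDiff ℝ 2 f)
    (μ : ℝ) (hμ : 0 < μ)
    (S : Set (EuclideanSpace ℝ (Fin n)))
    (hS : S = {y | IsLocalMin f y ∧ f y = f xb})
    (hPL : ∀ᶠ x in 𝓝 xb, f x - f xb ≤ (1 / (2 * μ)) * ‖gradient f x‖ ^ 2) :
    ∀ᶠ x in 𝓝 xb, x ∈ S →
      Module.finrank ℝ (LinearMap.range ((fderiv ℝ (gradient f) x :
          EuclideanSpace ℝ (Fin n) →ₗ[ℝ] EuclideanSpace ℝ (Fin n)))) =
        Module.finrank ℝ (LinearMap.range ((fderiv ℝ (gradient f) xb :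
          EuclideanSpace ℝ (Fin n) →ₗ[ℝ] EuclideanSpace ℝ (Fin n)))) := by
  subst hS
  have hdiff : Differentiable ℝ f := hf.differentiable two_ne_zero
  have hG : Differentiable ℝ (gradient f) := hf.contDiff_gradient.differentiable one_ne_zero
  have hHess : Tendsto (fderiv ℝ (gradient f)) (𝓝 xb) (𝓝 (fderiv ℝ (gradient f) xb)) :=
    (hf.contDiff_gradient.continuous_fderiv one_ne_zero).tendsto xb
  filter_upwards [hPL.eventually_nhds,
    hHess.eventually (ContinuousLinearMap.eventually_finrank_range_le _),
    hHess.eventually (ball_mem_nhds _ hμ)] with x hPLx hrank_ge hclose hxS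
  obtain ⟨hxmin, hfx⟩ := hxS
  rw [← hfx] at hPLx
  have hcoer := (hf.isSymmetric_fderiv_gradient x).mul_norm_sq_le_inner_of_mem_range
    (hxmin.inner_fderiv_gradient_self_nonneg hdiff (hG x))
    (mul_inner_fderiv_gradient_self_le_of_pl hμ hdiff (hG x) hxmin.gradient_eq_zero hPLx)
  rw [dist_eq_norm] at hclose
  exact le_antisymm (ContinuousLinearMap.finrank_range_le_of_norm_sub_lt hcoer hclose) hrank_ge

/-- Under the PL inequality, the rank of the Hessian is locally constant along the
solution set `S` near `xb`. -/
theorem pl_hessian_rank_locally_constant {n : ℕ}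
    (f : EuclideanSpace ℝ (Fin n) → ℝ) (xb : EuclideanSpace ℝ (Fin n))
    (hf : ContDiff ℝ 2 f) (hmin : IsLocalMin f xb)
    (μ : ℝ) (hμ : 0 < μ)
    (S : Set (EuclideanSpace ℝ (Fin n)))
    (hS : S = {y | IsLocalMin f y ∧ f y = f xb})
    (hPL : ∀ᶠ x in 𝓝 xb, f x - f xb ≤ (1 / (2 * μ)) * ‖gradient f x‖ ^ 2) :
    ∀ᶠ x in 𝓝 xb, x ∈ S →
      Module.finrank ℝ (LinearMap.range ((fderiv ℝ (gradient f) x :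
          EuclideanSpace ℝ (Fin n) →ₗ[ℝ] EuclideanSpace ℝ (Fin n)))) =
        Module.finrank ℝ (LinearMap.range ((fderiv ℝ (gradient f) xb :
          EuclideanSpace ℝ (Fin n) →ₗ[ℝ] EuclideanSpace ℝ (Fin n)))) :=
  pl_hessian_rank_locally_constant_general f xb hf μ hμ S hS hPL
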